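/- Let $G$ be a multigraph on vertices $\{0,1,\ldots,n\}$ obtained from the complete multigraph $K_{n+1}^{a,b}$ (with $a,b \ge 1$) by deleting some edges incident to the root $0$, so that vertex $i$ retains $a_i$ edges to the root with $0 \le a_i \le a$. Then $\dim_K(R/\mathcal{M}_G^{(1)}) = \det \widetilde{Q}_G$, where $\widetilde{Q}_G$ is the matrix with diagonal entries $a_i + (n-1)b$ and off-diagonal entries $b$, and $\mathcal{M}_G^{(1)} \subseteq R = K[x_1,\ldots,x_n]$ is generated by $x_t^{a_t + (n-1)b}$ for all $t$ and $x_i^{a_i + (n-2)b} x_j^{a_j + (n-2)b}$ for all $i < j$. -/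

import Mathlib

/-!
For a monomial ideal `J`, the monomials divisible by no generator of `J` (the standard
monomials) form a `K`-basis of `K[x] ⧸ J`. With `D t = c t + (n - 1) b` and
`d t = c t + (n - 2) b`, a monomial `x ^ u` is standard exactly when `u < D` and at most one
coordinate satisfies `d t ≤ u t`; sorting by that coordinate gives
`∏ d + ∑ i, (D i - d i) ∏_{j ≠ i} d j` standard monomials. On the other side
`Q = diagonal d + b • 𝟙 𝟙ᵀ`, and the matrix determinant lemma
`det (A + u vᵀ) = det A + vᵀ (adj A) u`, with the adjugate of a diagonal matrix, yields
`∏ d + b ∑ i, ∏_{j ≠ i} d j`.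
-/

namespace Matrix

variable {n R : Type*} [Fintype n] [DecidableEq n] [CommRing R]

lemma det_of_add_smul_rows (A : Matrix n n R) (u v : n → R) (s : Finset n) :
    det (of fun i => if i ∈ s then A i + u i • v else A i) =
      det A + ∑ i ∈ s, u i * det (A.updateRow i v) := by
  induction s using Finset.induction_on generalizing A with
  | empty => simp only [Finset.notMem_empty, if_false, Finset.sum_empty, add_zero]; rfl
  | insert k s hk ih =>
    set B : Matrix n n R := of fun i => if i ∈ s then A i + u i • v else A i
    have hB : of (fun i => if i ∈ insert k s then A i + u i • v else A i) =
        B.updateRow k (A k + u k • v) := by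
      ext i j
      by_cases hi : i = k
      · subst hi; simp
      · simp [B, hi]
    have hBk : B.updateRow k (A k) = B := by
      rw [show A k = B k from funext fun j => by simp [B, hk], updateRow_eq_self]
    -- once row `k` is `v`, the perturbations `u i • v` of the other rows are multiples of it
    have hBv : (B.updateRow k v).det = (A.updateRow k v).det := by
      have hrows : B.updateRow k v = of fun i => if i ∈ s then A.updateRow k v i + u i • v
          else A.updateRow k v i := by
        ext i j
        by_cases hi : i = k
        · subst hi; simp [B, hk]
        · simp [B, hi]
      rw [hrows, ih, add_eq_left]
      refine Finset.sum_eq_zero fun i hi => ?_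
      have hik : i ≠ k := ne_of_mem_of_not_mem hi hk
      rw [det_zero_of_row_eq hik (by simp [updateRow_ne hik.symm]), mul_zero]
    rw [hB, det_updateRow_add, hBk, det_updateRow_smul, hBv, ih, Finset.sum_insert hk]
    ring

theorem det_add_vecMulVec (A : Matrix n n R) (u v : n → R) :
    (A + vecMulVec u v).det = A.det + v ⬝ᵥ (adjugate A *ᵥ u) := by
  have hrows : A + vecMulVec u v = of fun i => if i ∈ Finset.univ then A i + u i • v else A i := by
    ext i j
    simp [vecMulVec_apply]
  rw [hrows, det_of_add_smul_rows, dotProduct_comm, ← vecMul_transpose, ← dotProduct_mulVec,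
    adjugate_transpose, ← cramer_eq_adjugate_mulVec, dotProduct]
  simp only [cramer_transpose_apply]

end Matrix

namespace MvPolynomial

variable {σ R : Type*} [CommRing R]

def standardExponents (S : Set (σ →₀ ℕ)) : Set (σ →₀ ℕ) := {u | ∀ s ∈ S, ¬ s ≤ u}

lemma isCompl_restrictSupport_compl (T : Set (σ →₀ ℕ)) :
    IsCompl (restrictSupport R Tᶜ) (restrictSupport R T) where
  disjoint := by
    refine Submodule.disjoint_def.mpr fun p hc h => ?_
    rw [mem_restrictSupport_iff] at hc h
    simpa using Set.subset_empty_iff.mp (Set.subset_inter hc h |>.trans (Set.compl_inter_self T).le)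
  codisjoint := by
    rw [codisjoint_iff, restrictSupport_eq_span, restrictSupport_eq_span, ← Submodule.span_union,
      ← Set.image_union, Set.compl_union_self, ← restrictSupport_eq_span, restrictSupport_univ]

lemma restrictScalars_span_monomial_image (S : Set (σ →₀ ℕ)) :
    (Ideal.span ((monomial · (1 : R)) '' S)).restrictScalars R =
      restrictSupport R (standardExponents S)ᶜ := by
  ext p
  simp only [Submodule.restrictScalars_mem, mem_ideal_span_monomial_image,
    mem_restrictSupport_iff, Set.subset_def, Finset.mem_coe, standardExponents, Set.mem_compl_iff,
    Set.mem_ofPred_eq, not_forall, not_not, exists_prop]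

noncomputable def quotientSpanMonomialEquiv (S : Set (σ →₀ ℕ)) :
    (MvPolynomial σ R ⧸ Ideal.span ((monomial · (1 : R)) '' S)) ≃ₗ[R]
      restrictSupport R (standardExponents S) :=
  (Submodule.Quotient.restrictScalarsEquiv R (Ideal.span ((monomial · (1 : R)) '' S))).symm ≪≫ₗ
    Submodule.quotientEquivOfIsCompl _ (restrictSupport R (standardExponents S))
      (restrictScalars_span_monomial_image (R := R) S ▸ isCompl_restrictSupport_compl _)

lemma finrank_quotient_span_monomial [Nontrivial R] (S : Set (σ →₀ ℕ)) :
    Module.finrank R (MvPolynomial σ R ⧸ Ideal.span ((monomial · (1 : R)) '' S)) =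
      Nat.card (standardExponents S) :=
  (quotientSpanMonomialEquiv S).finrank_eq.trans
    (Module.finrank_eq_nat_card_basis (basisRestrictSupport R _))

end MvPolynomial

section Counting

variable {σ : Type*} [Fintype σ] [DecidableEq σ] (D d : σ → ℕ)

-- `excessBox D d (some i)` holds the vectors below `D` whose only coordinate reaching `d` is `i`,
-- `excessBox D d none` the vectors below `d`.
def excessBox (o : Option σ) : Finset (σ → ℕ) :=
  Fintype.piFinset fun t => if o = some t then Finset.Ico (d t) (D t) else Finset.range (d t)

variable {D d}

lemma mem_excessBox {o : Option σ} {f : σ → ℕ} :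
    f ∈ excessBox D d o ↔ ∀ t, if o = some t then d t ≤ f t ∧ f t < D t else f t < d t := by
  simp only [excessBox, Fintype.mem_piFinset]
  refine forall_congr' fun t => ?_
  split_ifs <;> simp

lemma eq_some_of_mem_excessBox {o : Option σ} {f : σ → ℕ} (hf : f ∈ excessBox D d o) {i : σ}
    (hi : d i ≤ f i) : o = some i := by
  have := mem_excessBox.mp hf i
  split_ifs at this with h
  · exact h
  · omega

lemma le_of_mem_excessBox_some {i : σ} {f : σ → ℕ} (hf : f ∈ excessBox D d (some i)) :
    d i ≤ f i := by
  have h := mem_excessBox.mp hf i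
  rw [if_pos rfl] at h
  exact h.1

lemma card_excessBox_none : (excessBox D d none).card = ∏ t, d t := by
  simp [excessBox]

lemma card_excessBox_some (i : σ) :
    (excessBox D d (some i)).card = (D i - d i) * ∏ t ∈ Finset.univ.erase i, d t := by
  rw [excessBox, Fintype.card_piFinset, ← Finset.mul_prod_erase _ _ (Finset.mem_univ i)]
  simp only [if_true, Nat.card_Ico]
  congr 1
  refine Finset.prod_congr rfl fun t ht => ?_
  rw [if_neg (by simpa [eq_comm] using Finset.ne_of_mem_erase ht), Finset.card_range]

lemma setOf_lt_and_excess_subsingleton_eq_biUnion (hdD : ∀ t, d t ≤ D t) :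
    {f : σ → ℕ | (∀ t, f t < D t) ∧ {t | d t ≤ f t}.Subsingleton} =
      ↑(Finset.univ.biUnion (excessBox D d)) := by
  ext f
  simp only [Set.mem_ofPred_eq, Finset.coe_biUnion, Finset.coe_univ, Set.mem_univ,
    Set.iUnion_true, Set.mem_iUnion, Finset.mem_coe]
  constructor
  · rintro ⟨hD, hsub⟩
    by_cases hex : ∃ i, d i ≤ f i
    · obtain ⟨i, hi⟩ := hex
      refine ⟨some i, mem_excessBox.mpr fun t => ?_⟩
      split_ifs with ht
      · cases Option.some_inj.mp ht; exact ⟨hi, hD i⟩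
      · by_contra! h
        exact ht (congrArg some (hsub hi h))
    · exact ⟨none, mem_excessBox.mpr fun t => by simpa using not_le.mp (not_exists.mp hex t)⟩
  · rintro ⟨o, hf⟩
    refine ⟨fun t => ?_, fun i hi j hj => ?_⟩
    · have := mem_excessBox.mp hf t
      split_ifs at this
      · exact this.2
      · exact this.trans_le (hdD t)
    · exact Option.some_inj.mp ((eq_some_of_mem_excessBox hf hi).symm.trans
        (eq_some_of_mem_excessBox hf hj))

lemma pairwiseDisjoint_excessBox :
    ((Finset.univ : Finset (Option σ)) : Set (Option σ)).PairwiseDisjoint (excessBox D d) := by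
  intro o _ o' _ hne
  refine Finset.disjoint_left.mpr fun f hf hf' => hne ?_
  cases o with
  | none => cases o' with
    | none => rfl
    | some j => exact eq_some_of_mem_excessBox hf (le_of_mem_excessBox_some hf')
  | some i => exact (eq_some_of_mem_excessBox hf' (le_of_mem_excessBox_some hf)).symm

lemma card_setOf_lt_and_excess_subsingleton (hdD : ∀ t, d t ≤ D t) :
    Nat.card {u : σ →₀ ℕ | (∀ t, u t < D t) ∧ {t | d t ≤ u t}.Subsingleton} =
      ∏ t, d t + ∑ i, (D i - d i) * ∏ t ∈ Finset.univ.erase i, d t := by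
  have e : {u : σ →₀ ℕ | (∀ t, u t < D t) ∧ {t | d t ≤ u t}.Subsingleton} ≃
      {f : σ → ℕ | (∀ t, f t < D t) ∧ {t | d t ≤ f t}.Subsingleton} :=
    Finsupp.equivFunOnFinite.subtypeEquiv fun _ => Iff.rfl
  rw [Nat.card_congr e, setOf_lt_and_excess_subsingleton_eq_biUnion hdD, Nat.card_coe_set_eq,
    Set.ncard_coe_finset, Finset.card_biUnion pairwiseDisjoint_excessBox, Fintype.sum_option,
    card_excessBox_none]
  simp only [card_excessBox_some]

end Counting

lemma Finsupp.single_add_single_le_iff {σ : Type*} {i j : σ} (hij : i ≠ j) {a b : ℕ}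
    {u : σ →₀ ℕ} : single i a + single j b ≤ u ↔ a ≤ u i ∧ b ≤ u j := by
  refine ⟨fun h => ⟨by simpa [hij.symm] using h i, by simpa [hij] using h j⟩, fun ⟨hi, hj⟩ t => ?_⟩
  by_cases hti : t = i
  · subst hti; simpa [hij] using hi
  · by_cases htj : t = j
    · subst htj; simpa [hti] using hj
    · simp [Ne.symm hti, Ne.symm htj]

namespace MvPolynomial

variable {σ R : Type*} [CommRing R] [LinearOrder σ] (D d : σ → ℕ)

-- The exponents of the generators of the 1-skeleton ideal.
def skeletonExponents : Set (σ →₀ ℕ) :=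
  Set.range (fun t => Finsupp.single t (D t)) ∪
    {e | ∃ i j, i < j ∧ e = Finsupp.single i (d i) + Finsupp.single j (d j)}

lemma monomial_image_skeletonExponents :
    (monomial · (1 : R)) '' skeletonExponents D d =
      (Set.range fun t => (X t : MvPolynomial σ R) ^ D t) ∪
        {m | ∃ i j, i < j ∧ m = X i ^ d i * X j ^ d j} := by
  rw [skeletonExponents, Set.image_union, ← Set.range_comp]
  congr 1
  · simp [Function.comp_def, X_pow_eq_monomial]
  · ext m
    simp [X_pow_eq_monomial, monomial_mul, eq_comm]

lemma standardExponents_skeletonExponents :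
    standardExponents (skeletonExponents D d) =
      {u | (∀ t, u t < D t) ∧ {t | d t ≤ u t}.Subsingleton} := by
  ext u
  simp only [standardExponents, skeletonExponents, Set.mem_ofPred_eq, Set.mem_union]
  constructor
  · intro h
    refine ⟨fun t => not_le.mp fun ht => h _ (Or.inl ⟨t, rfl⟩) (Finsupp.single_le_iff.mpr ht),
      fun i hi j hj => ?_⟩
    by_contra hij
    rcases lt_or_gt_of_ne hij with hlt | hlt
    · exact h _ (Or.inr ⟨i, j, hlt, rfl⟩) ((Finsupp.single_add_single_le_iff hij).mpr ⟨hi, hj⟩)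
    · exact h _ (Or.inr ⟨j, i, hlt, rfl⟩)
        ((Finsupp.single_add_single_le_iff (Ne.symm hij)).mpr ⟨hj, hi⟩)
  · rintro ⟨hD, hsub⟩ s (⟨t, rfl⟩ | ⟨i, j, hij, rfl⟩) hle
    · exact (hD t).not_ge (Finsupp.single_le_iff.mp hle)
    · obtain ⟨hi, hj⟩ := (Finsupp.single_add_single_le_iff hij.ne).mp hle
      exact hij.ne (hsub hi hj)

end MvPolynomial

open MvPolynomial

theorem stmt17_general (K : Type*) [Field K] (n b : ℕ)
    (c : Fin n → ℕ)
    (Q : Matrix (Fin n) (Fin n) ℤ)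
    (hQ : ∀ i j, Q i j = if i = j then ((c i + (n - 1) * b : ℕ) : ℤ) else (b : ℤ))
    (J : Ideal (MvPolynomial (Fin n) K))
    (hJ : J = Ideal.span
      ((Set.range fun t => (X t : MvPolynomial (Fin n) K) ^ (c t + (n - 1) * b)) ∪
        {m | ∃ i j : Fin n, i < j ∧
          m = X i ^ (c i + (n - 2) * b) * X j ^ (c j + (n - 2) * b)})) :
    (Module.finrank K (MvPolynomial (Fin n) K ⧸ J) : ℤ) = Q.det := by
  set D : Fin n → ℕ := fun t => c t + (n - 1) * b
  set d : Fin n → ℕ := fun t => c t + (n - 2) * b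
  have hdD : ∀ t, d t ≤ D t := fun t => by simp only [D, d]; gcongr; omega
  have hJ' : J = Ideal.span ((monomial · 1) '' skeletonExponents D d) := by
    rw [hJ, monomial_image_skeletonExponents]
  have hQ' : Q = Matrix.diagonal (fun i => (d i : ℤ)) +
      Matrix.vecMulVec (fun i => ((D i - d i : ℕ) : ℤ)) 1 := by
    ext i j
    rw [hQ]
    by_cases hij : i = j
    · subst hij; simp [D, Nat.cast_sub (hdD i)]
    -- an off-diagonal entry forces `n ≥ 2`, where `(n - 1) * b - (n - 2) * b = b`
    · obtain ⟨m, rfl⟩ : ∃ m, n = m + 2 := ⟨n - 2, by have := i.isLt; have := j.isLt; omega⟩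
      simp [hij, D, d, add_one_mul]
  rw [hJ', finrank_quotient_span_monomial, standardExponents_skeletonExponents,
    card_setOf_lt_and_excess_subsingleton hdD, hQ', Matrix.det_add_vecMulVec, Matrix.det_diagonal,
    Matrix.adjugate_diagonal]
  simp [dotProduct, Matrix.mulVec_diagonal, mul_comm]

theorem stmt17 (K : Type*) [Field K] (n a b : ℕ) (hn : 1 ≤ n) (ha : 1 ≤ a) (hb : 1 ≤ b)
    (c : Fin n → ℕ) (hc : ∀ i, c i ≤ a)
    (Q : Matrix (Fin n) (Fin n) ℤ)
    (hQ : ∀ i j, Q i j = if i = j then ((c i + (n - 1) * b : ℕ) : ℤ) else (b : ℤ))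
    (J : Ideal (MvPolynomial (Fin n) K))
    (hJ : J = Ideal.span
      ((Set.range fun t => (X t : MvPolynomial (Fin n) K) ^ (c t + (n - 1) * b)) ∪
        {m | ∃ i j : Fin n, i < j ∧
          m = X i ^ (c i + (n - 2) * b) * X j ^ (c j + (n - 2) * b)})) :
    (Module.finrank K (MvPolynomial (Fin n) K ⧸ J) : ℤ) = Q.det :=
  stmt17_general K n b c Q hQ J hJ
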